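/- If a concurrent implementation I and a sequential specification S are both data independent, then every execution of I is linearizable with respect to S if and only if every differentiated execution of I (one in which each data value is used by at most one input operation) is linearizable with respect to some differentiated sequential execution of S. -/

import Mathlib

attribute [local instance] Classical.propDecidable

/-- Label of an operation / method event: a method name, whether the method is
an input method, and the data value (from the infinite domain ℕ). -/
structure Label where
  method : ℕ
  isInput : Bool
  data : ℕ
deriving DecidableEq

/-- An execution, abstracted as a history: a finite set of (completed)
operations, identified by natural numbers, with their labels and a
happens-before relation that is a strict interval order. -/
structure Hist where
  ops : Finset ℕ
  label : ℕ → Label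
  hb : ℕ → ℕ → Prop
  hb_irrefl : ∀ o, ¬ hb o o
  hb_trans : ∀ a b c, hb a b → hb b c → hb a c
  interval : ∀ a b c d, hb a b → hb c d → hb a d ∨ hb c b

/-- Differentiated: each data value is used by at most one input operation. -/
def Differentiated (h : Hist) : Prop :=
  ∀ o1 ∈ h.ops, ∀ o2 ∈ h.ops,
    (h.label o1).isInput = true → (h.label o2).isInput = true →
    (h.label o1).data = (h.label o2).data → o1 = o2

/-- Renaming of data values, applied to a label. -/
def renameL (r : ℕ → ℕ) (l : Label) : Label := ⟨l.method, l.isInput, r l.data⟩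

/-- Renaming applied to an execution. -/
def Hist.renameH (h : Hist) (r : ℕ → ℕ) : Hist :=
  { h with label := fun o => renameL r (h.label o) }

/-- Renaming applied to a sequential execution (a word of labels). -/
def renameW (r : ℕ → ℕ) (u : List Label) : List Label := u.map (renameL r)

/-- A differentiated sequential execution: each data value is used by at most
one input method event. -/
def DiffWord (u : List Label) : Prop :=
  ∀ d, u.countP (fun l => l.isInput && l.data == d) ≤ 1

/-- The execution `h` is linearizable with respect to the sequential execution
`u`: there is a label-preserving bijection (an enumeration `l` of the
operations of `h` mapped by `label` onto `u`) compatible with happens-before. -/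
def Hist.Linearizes (h : Hist) (u : List Label) : Prop :=
  ∃ l : List ℕ, l.Nodup ∧ (∀ o, o ∈ l ↔ o ∈ h.ops) ∧
    l.Pairwise (fun a b => ¬ h.hb b a) ∧ l.map h.label = u

/-- `h` is linearizable with respect to a set of sequential executions. -/
def LinearizableS (h : Hist) (M : Set (List Label)) : Prop :=
  ∃ u ∈ M, h.Linearizes u

/-- Data independence of an implementation (a set of executions): closed under
renamings, and every execution is a renaming of a differentiated one. -/
def DataIndependentI (I : Set Hist) : Prop :=
  (∀ h ∈ I, ∀ r, h.renameH r ∈ I) ∧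
  (∀ h ∈ I, ∃ h' ∈ I, Differentiated h' ∧ ∃ r, h'.renameH r = h)

/-- Data independence of a specification (a set of sequential executions). -/
def DataIndependentS (S : Set (List Label)) : Prop :=
  (∀ u ∈ S, ∀ r, renameW r u ∈ S) ∧
  (∀ u ∈ S, ∃ u' ∈ S, DiffWord u' ∧ ∃ r, renameW r u' = u)

/-! Linearizability depends only on the happens-before order and the labels, so it is transported
along renamings by the same enumeration: writing `h = h'.renameH r` with `h'` differentiated, a
linearization of `h'` to `u ∈ S` is one of `h` to `renameW r u ∈ S`. Conversely, a word linearizing a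
differentiated execution is the image of its operations under a label-preserving bijection, so it is
differentiated as well. -/

theorem List.Nodup.countP_le_one {α : Type*} {l : List α} {p : α → Bool} (hl : l.Nodup)
    (hp : ∀ a ∈ l, ∀ b ∈ l, p a → p b → a = b) : l.countP p ≤ 1 := by
  classical
  rw [List.countP_eq_length_filter, ← List.toFinset_card_of_nodup (hl.filter p),
    Finset.card_le_one]
  simp only [List.mem_toFinset, List.mem_filter]
  exact fun a ha b hb => hp a ha.1 b hb.1 ha.2 hb.2

theorem Hist.Linearizes.renameH {h : Hist} {u : List Label} (hu : h.Linearizes u) (r : ℕ → ℕ) :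
    (h.renameH r).Linearizes (renameW r u) := by
  obtain ⟨l, hnd, hmem, hpw, rfl⟩ := hu
  exact ⟨l, hnd, hmem, hpw, by simp only [renameW, List.map_map]; rfl⟩

theorem Hist.Linearizes.diffWord {h : Hist} {u : List Label} (hd : Differentiated h)
    (hu : h.Linearizes u) : DiffWord u := by
  obtain ⟨l, hnd, hmem, -, rfl⟩ := hu
  intro d
  rw [List.countP_map]
  refine hnd.countP_le_one fun a ha b hb hqa hqb => ?_
  simp only [Function.comp_apply, Bool.and_eq_true, beq_iff_eq] at hqa hqb
  exact hd a ((hmem a).mp ha) b ((hmem b).mp hb) hqa.1 hqb.1 (hqa.2.trans hqb.2.symm)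

/-- for data-independent `I` and `S`, every execution of `I` is
linearizable with respect to `S` iff every differentiated execution of `I` is
linearizable with respect to some differentiated sequential execution of `S`. -/
theorem data_independence_reduction (I : Set Hist) (S : Set (List Label))
    (hI : DataIndependentI I) (hS : DataIndependentS S) :
    (∀ h ∈ I, ∃ u ∈ S, h.Linearizes u) ↔
    (∀ h ∈ I, Differentiated h → ∃ u ∈ S, DiffWord u ∧ h.Linearizes u) := by
  constructor
  · intro H h hh hd
    obtain ⟨u, huS, hu⟩ := H h hh
    exact ⟨u, huS, hu.diffWord hd, hu⟩
  · intro H h hh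
    obtain ⟨h', hh', hd, r, rfl⟩ := hI.2 h hh
    obtain ⟨u, huS, -, hu⟩ := H h' hh' hd
    exact ⟨renameW r u, hS.1 u huS r, hu.renameH r⟩
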